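/- arXiv:2108.09520 — 2 statements merged into one kernel-verified Lean document; each statement's English description precedes it below -/
import Mathlib

section
/- Let X = (X_1, …, X_p) be a square-integrable random vector in R^p with E[X_j²] = 1 for all j and λ_min(E[X X']) ≥ λ₁ > 0. Let α > 1 and C_α > 0, and let β ∈ R^p satisfy the polynomial-decay class condition: ‖β(J)‖₁ ≤ C_α (‖β(J)‖₂²)^{(α−1)/(2α−1)} for every J ⊆ {1, …, p}. Let D = Σ_{j=1}^p β_j X_j and fix ξ ∈ (0,1]. Define V_0 = D, J_0 = ∅, and recursively for m ≥ 1: choose any j_m ∈ {1, …, p} with |E[V_{m−1} X_{j_m}]| ≥ ξ max_{1≤ℓ≤p} |E[V_{m−1} X_ℓ]|, set J_m = J_{m−1} ∪ {j_m}, and let V_m = D − P_{J_m} D, where P_{J_m} is the orthogonal projection in L² onto span{X_j : j ∈ J_m}. Then there exists a constant G₁ > 0, depending only on ξ, λ₁, α, C_α and E[D²], such that E[V_m²] ≤ G₁ · m^{−(2α−1)} for every m ≥ 1. -/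
/-!
Work in `L²(μ)`, where `V_m` is `D` minus its orthogonal projection onto the span of the
selected `X_j`. Write `A_m = E[V_m²]`, `γ = (α - 1)/(2α - 1)` and `t_m = E[V_m X_{j_m}]`.

* `D - V_{m+1}` is the best approximation of `D` in a span that also contains
  `D - V_m + t_m X_{j_m}`, so Pythagoras gives `A_{m+1} ≤ ‖V_m - t_m X_{j_m}‖² = A_m - t_m²`.
* Orthogonality gives `A_m = ∑_{j ∉ J_m} β_j E[V_m X_j] ≤ ‖β(J_mᶜ)‖₁ · max_l |E[V_m X_l]|`, and
  `V_m = ∑ b_j X_j` with `b_j = β_j` off `J_m`, so the eigenvalue bound yields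
  `λ₁ ‖β(J_mᶜ)‖₂² ≤ A_m`. With the decay condition and the weak greedy choice this becomes
  `t_m² ≥ c A_m^{2(1-γ)} = c A_m^{1+θ}`, where `θ = 1 - 2γ = 1/(2α - 1)`.
* For `A_{m+1} ≤ A_m - c A_m^{1+θ}`, Bernoulli's inequality makes `A_m^{-θ}` grow by at least
  `cθ` per step, hence `A_m ≤ (cθ m)^{-1/θ} = (cθ)^{-(2α-1)} m^{-(2α-1)}`.
-/

open MeasureTheory Finset Matrix
open scoped InnerProductSpace ComplexOrder

theorem one_add_mul_le_one_sub_rpow_neg {u θ : ℝ} (hu0 : 0 ≤ u) (hu1 : u < 1) (hθ : 0 ≤ θ) :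
    1 + θ * u ≤ (1 - u) ^ (-θ) := by
  have h1u : 0 < 1 - u := by linarith
  -- Bernoulli's inequality with exponent `1 + θ` at `1 + u / (1 - u) = (1 - u)⁻¹`
  have hB := one_add_mul_self_le_rpow_one_add (s := u / (1 - u)) (by
    have : 0 ≤ u / (1 - u) := div_nonneg hu0 h1u.le
    linarith) (p := 1 + θ) (by linarith)
  have hinv : 1 + u / (1 - u) = (1 - u)⁻¹ := by field_simp; ring
  rw [hinv, Real.inv_rpow h1u.le, ← Real.rpow_neg h1u.le, neg_add, Real.rpow_add h1u,
    Real.rpow_neg_one] at hB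
  have := mul_le_mul_of_nonneg_left hB h1u.le
  rw [← mul_assoc, mul_inv_cancel₀ h1u.ne', one_mul, mul_add, mul_one, mul_left_comm,
    mul_div_cancel₀ _ h1u.ne'] at this
  linarith

theorem rpow_neg_add_mul_le_rpow_neg {x y c θ : ℝ} (hx : 0 < x) (hy : 0 < y) (hc : 0 ≤ c)
    (hθ : 0 ≤ θ) (hxy : y ≤ x - c * x ^ (1 + θ)) :
    x ^ (-θ) + c * θ ≤ y ^ (-θ) := by
  set u := c * x ^ θ
  have hu0 : 0 ≤ u := by positivity
  have hyu : y ≤ x * (1 - u) := by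
    rw [Real.rpow_add hx, Real.rpow_one] at hxy; linarith
  have hu1 : u < 1 := by nlinarith
  have hxθ : x ^ (-θ) * x ^ θ = 1 := by rw [← Real.rpow_add hx]; simp
  calc x ^ (-θ) + c * θ = x ^ (-θ) * (1 + θ * u) := by
        rw [show x ^ (-θ) * (1 + θ * u) = x ^ (-θ) + c * θ * (x ^ (-θ) * x ^ θ) by ring, hxθ,
          mul_one]
    _ ≤ x ^ (-θ) * (1 - u) ^ (-θ) := by
        gcongr; exact one_add_mul_le_one_sub_rpow_neg hu0 hu1 hθ
    _ = (x * (1 - u)) ^ (-θ) := (Real.mul_rpow hx.le (by linarith)).symm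
    _ ≤ y ^ (-θ) := Real.rpow_le_rpow_of_nonpos hy hyu (by linarith)

theorem le_rpow_neg_of_le_sub_mul_rpow {a : ℕ → ℝ} {c θ : ℝ} (hc : 0 < c) (hθ : 0 < θ)
    (ha : ∀ n, 0 ≤ a n) (hstep : ∀ n, a (n + 1) ≤ a n - c * a n ^ (1 + θ))
    {m : ℕ} (hm : 0 < m) : a m ≤ (c * θ * m) ^ (-θ⁻¹) := by
  have hanti : Antitone a := antitone_nat_of_succ_le fun n =>
    (hstep n).trans (sub_le_self _ (by have := ha n; positivity))
  obtain ham | ham := (ha m).eq_or_lt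
  · rw [← ham]; positivity
  have hpos : ∀ k ≤ m, 0 < a k := fun k hk => ham.trans_le (hanti hk)
  have hlin : ∀ k ≤ m, c * θ * k ≤ a k ^ (-θ) := by
    intro k hk
    induction k with
    | zero => simpa using Real.rpow_nonneg (ha 0) _
    | succ k ih =>
      have := rpow_neg_add_mul_le_rpow_neg (hpos k (by omega)) (hpos (k + 1) hk) hc.le hθ.le
        (hstep k)
      push_cast
      linarith [ih (by omega)]
  have hcm : 0 < c * θ * m := by positivity
  calc a m = (a m ^ (-θ)) ^ (-θ⁻¹) := by
        rw [← Real.rpow_mul (ha m), neg_mul_neg, mul_inv_cancel₀ hθ.ne', Real.rpow_one]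
    _ ≤ (c * θ * m) ^ (-θ⁻¹) :=
        Real.rpow_le_rpow_of_nonpos hcm (hlin m le_rfl) (by simp [hθ.le])

theorem rpow_one_sub_le_of_le_mul_div_rpow {A l γ K s : ℝ} (hA : 0 ≤ A) (hl : 0 < l)
    (hγ : γ < 1) (hKs : 0 ≤ K * s) (h : A ≤ K * (A / l) ^ γ * s) :
    l ^ γ * A ^ (1 - γ) ≤ K * s := by
  obtain rfl | hA := hA.eq_or_lt
  · rw [Real.zero_rpow (by linarith), mul_zero]; exact hKs
  have hAγ : 0 < A ^ γ := Real.rpow_pos_of_pos hA γ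
  have hsplit : A = A ^ γ * A ^ (1 - γ) := by
    rw [← Real.rpow_add hA, add_sub_cancel, Real.rpow_one]
  rw [Real.div_rpow hA.le hl.le] at h
  refine le_of_mul_le_mul_left ?_ hAγ
  calc A ^ γ * (l ^ γ * A ^ (1 - γ)) = l ^ γ * A := by rw [mul_left_comm, ← hsplit]
    _ ≤ l ^ γ * (K * (A ^ γ / l ^ γ) * s) := by gcongr
    _ = A ^ γ * (K * s) := by field_simp

theorem Matrix.IsHermitian.posSemidef_sub_smul_one {𝕜 n : Type*} [RCLike 𝕜] [Fintype n]
    [DecidableEq n] {A : Matrix n n 𝕜} (hA : A.IsHermitian) {c : ℝ}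
    (hc : ∀ i, c ≤ hA.eigenvalues i) : (A - (c : 𝕜) • 1).PosSemidef := by
  set U : Matrix n n 𝕜 := (hA.eigenvectorUnitary : Matrix n n 𝕜)
  have hU : U * star U = 1 := Unitary.mul_star_self_of_mem hA.eigenvectorUnitary.2
  have hdiag : A - (c : 𝕜) • 1 =
      U * diagonal (fun i => ((hA.eigenvalues i - c : ℝ) : 𝕜)) * star U := by
    conv_lhs => rw [hA.spectral_theorem]
    simp only [Unitary.conjStarAlgAut_apply, RCLike.ofReal_sub]
    have hsub : diagonal (fun i => (hA.eigenvalues i : 𝕜) - c) =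
        diagonal (RCLike.ofReal ∘ hA.eigenvalues) - (c : 𝕜) • 1 := by
      rw [smul_one_eq_diagonal, diagonal_sub]
      rfl
    rw [hsub, mul_sub, sub_mul, Matrix.mul_smul, mul_one, Matrix.smul_mul, hU]
  rw [hdiag]
  exact (PosSemidef.diagonal fun i => by simpa using hc i).mul_mul_conjTranspose_same U

theorem mul_sum_sq_le_norm_sq_sum_smul {E ι : Type*} [NormedAddCommGroup E]
    [InnerProductSpace ℝ E] [Fintype ι] [DecidableEq ι] {x : ι → E} (hG : (gram ℝ x).IsHermitian)
    {c : ℝ} (hc : ∀ i, c ≤ hG.eigenvalues i) (b : ι → ℝ) :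
    c * ∑ i, b i ^ 2 ≤ ‖∑ i, b i • x i‖ ^ 2 := by
  have h := (hG.posSemidef_sub_smul_one hc).dotProduct_mulVec_nonneg b
  rw [sub_mulVec, dotProduct_sub, star_dotProduct_gram_mulVec, real_inner_self_eq_norm_sq,
    smul_mulVec, one_mulVec, dotProduct_smul] at h
  simpa [dotProduct, sq] using h

section Residual

variable {E ι : Type*} [NormedAddCommGroup E] [InnerProductSpace ℝ E]

/-- `v = d - P_J d`, with `P_J` the orthogonal projection onto `span {x j | j ∈ J}`. -/
def IsResidual (x : ι → E) (d : E) (J : Finset ι) (v : E) : Prop :=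
  (∃ c : ι → ℝ, v = d - ∑ j ∈ J, c j • x j) ∧ ∀ j ∈ J, ⟪v, x j⟫_ℝ = 0

variable {x : ι → E} {d v v' : E} {J : Finset ι}

theorem IsResidual.inner_sum_smul_eq_zero (hv : IsResidual x d J v) {s : Finset ι} (hs : s ⊆ J)
    (c : ι → ℝ) : ⟪v, ∑ j ∈ s, c j • x j⟫_ℝ = 0 := by
  rw [inner_sum]
  exact Finset.sum_eq_zero fun j hj => by rw [inner_smul_right, hv.2 j (hs hj), mul_zero]

variable [DecidableEq ι]

theorem IsResidual.norm_sq_le_of_insert (hv : IsResidual x d J v)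
    {k : ι} (hv' : IsResidual x d (insert k J) v') (hk : ‖x k‖ = 1) :
    ‖v'‖ ^ 2 ≤ ‖v‖ ^ 2 - ⟪v, x k⟫_ℝ ^ 2 := by
  obtain ⟨c, hc⟩ := hv.1
  obtain ⟨c', hc'⟩ := hv'.1
  set t := ⟪v, x k⟫_ℝ with ht
  set u := ∑ j ∈ insert k J, c' j • x j - ∑ j ∈ J, c j • x j - t • x k
  have hu : v - t • x k = v' + u := by rw [hc, hc']; simp only [u]; abel
  have horth : ⟪v', u⟫_ℝ = 0 := by
    rw [inner_sub_right, inner_sub_right, inner_smul_right,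
      hv'.inner_sum_smul_eq_zero subset_rfl, hv'.inner_sum_smul_eq_zero (subset_insert k J),
      hv'.2 k (mem_insert_self k J)]
    ring
  have hpyth := norm_add_sq_eq_norm_sq_add_norm_sq_real horth
  calc ‖v'‖ ^ 2 ≤ ‖v' + u‖ ^ 2 := by nlinarith [sq_nonneg ‖u‖]
    _ = ‖v - t • x k‖ ^ 2 := by rw [hu]
    _ = ‖v‖ ^ 2 - t ^ 2 := by
        rw [norm_sub_sq_real, inner_smul_right, ← ht, norm_smul, hk, mul_one, Real.norm_eq_abs,
          sq_abs]
        ring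

variable [Fintype ι] {β : ι → ℝ}

theorem IsResidual.norm_sq_eq_sum_compl (hv : IsResidual x d J v) (hd : d = ∑ j, β j • x j) :
    ‖v‖ ^ 2 = ∑ j ∈ Jᶜ, β j * ⟪v, x j⟫_ℝ := by
  obtain ⟨c, hc⟩ := hv.1
  have hJ : ∑ j ∈ J, β j * ⟪v, x j⟫_ℝ = 0 :=
    Finset.sum_eq_zero fun j hj => by rw [hv.2 j hj, mul_zero]
  calc ‖v‖ ^ 2 = ⟪v, d⟫_ℝ - ⟪v, ∑ j ∈ J, c j • x j⟫_ℝ := by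
        rw [← real_inner_self_eq_norm_sq, ← inner_sub_right, ← hc]
    _ = ∑ j, β j * ⟪v, x j⟫_ℝ := by
        simp only [hv.inner_sum_smul_eq_zero subset_rfl, sub_zero, hd, inner_sum, inner_smul_right]
    _ = ∑ j ∈ Jᶜ, β j * ⟪v, x j⟫_ℝ := by
        rw [← Finset.sum_add_sum_compl J, hJ, zero_add]

theorem IsResidual.exists_eq_sum_smul (hv : IsResidual x d J v) (hd : d = ∑ j, β j • x j) :
    ∃ b : ι → ℝ, v = ∑ j, b j • x j ∧ ∀ j ∉ J, b j = β j := by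
  obtain ⟨c, hc⟩ := hv.1
  refine ⟨fun j => β j - if j ∈ J then c j else 0, ?_, fun j hj => by simp [hj]⟩
  simp only [sub_smul, ite_smul, zero_smul, Finset.sum_sub_distrib, Finset.sum_ite_mem,
    Finset.univ_inter, hc, hd]

theorem IsResidual.mul_sum_compl_sq_le_norm_sq (hv : IsResidual x d J v)
    (hd : d = ∑ j, β j • x j) (hG : (gram ℝ x).IsHermitian) {c : ℝ} (hc0 : 0 ≤ c)
    (hc : ∀ i, c ≤ hG.eigenvalues i) :
    c * ∑ j ∈ Jᶜ, β j ^ 2 ≤ ‖v‖ ^ 2 := by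
  obtain ⟨b, rfl, hb⟩ := hv.exists_eq_sum_smul hd
  calc c * ∑ j ∈ Jᶜ, β j ^ 2 = c * ∑ j ∈ Jᶜ, b j ^ 2 := by
        rw [Finset.sum_congr rfl fun j hj => by rw [← hb j (Finset.mem_compl.mp hj)]]
    _ ≤ c * ∑ j, b j ^ 2 := by
        gcongr
        exact Finset.subset_univ _
    _ ≤ ‖∑ j, b j • x j‖ ^ 2 := mul_sum_sq_le_norm_sq_sum_smul hG hc b

theorem IsResidual.mul_rpow_le_sq_inner (hv : IsResidual x d J v) (hd : d = ∑ j, β j • x j)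
    (hG : (gram ℝ x).IsHermitian) {l : ℝ} (hl : 0 < l) (hle : ∀ i, l ≤ hG.eigenvalues i)
    {C γ : ℝ} (hC : 0 < C) (hγ0 : 0 ≤ γ) (hγ1 : γ < 1)
    (hβ : ∀ J : Finset ι, ∑ j ∈ J, |β j| ≤ C * (∑ j ∈ J, β j ^ 2) ^ γ)
    {ξ : ℝ} (hξ : 0 ≤ ξ) {k : ι} (hk : ξ * ⨆ i, |⟪v, x i⟫_ℝ| ≤ |⟪v, x k⟫_ℝ|) :
    (ξ * l ^ γ / C) ^ 2 * (‖v‖ ^ 2) ^ (2 * (1 - γ)) ≤ ⟪v, x k⟫_ℝ ^ 2 := by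
  set S := ⨆ i, |⟪v, x i⟫_ℝ|
  have hS : ∀ i, |⟪v, x i⟫_ℝ| ≤ S := fun i =>
    le_ciSup (f := fun i => |⟪v, x i⟫_ℝ|) (Set.finite_range _).bddAbove i
  have hS0 : 0 ≤ S := Real.iSup_nonneg fun i => abs_nonneg _
  have hA_le_l1 : ‖v‖ ^ 2 ≤ (∑ j ∈ Jᶜ, |β j|) * S := by
    rw [hv.norm_sq_eq_sum_compl hd, Finset.sum_mul]
    refine Finset.sum_le_sum fun j _ => (le_abs_self _).trans ?_
    rw [abs_mul]
    exact mul_le_mul_of_nonneg_left (hS j) (abs_nonneg _)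
  have hl2_le_A : ∑ j ∈ Jᶜ, β j ^ 2 ≤ ‖v‖ ^ 2 / l := by
    rw [le_div_iff₀ hl, mul_comm]
    exact hv.mul_sum_compl_sq_le_norm_sq hd hG hl.le hle
  have hA_le : ‖v‖ ^ 2 ≤ C * (‖v‖ ^ 2 / l) ^ γ * S := by
    refine hA_le_l1.trans (mul_le_mul_of_nonneg_right ((hβ Jᶜ).trans ?_) hS0)
    gcongr
  have hAγ := rpow_one_sub_le_of_le_mul_div_rpow (sq_nonneg _) hl hγ1 (by positivity) hA_le
  have habs : ξ * l ^ γ / C * (‖v‖ ^ 2) ^ (1 - γ) ≤ |⟪v, x k⟫_ℝ| := by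
    calc ξ * l ^ γ / C * (‖v‖ ^ 2) ^ (1 - γ) = ξ * (l ^ γ * (‖v‖ ^ 2) ^ (1 - γ)) / C := by ring
      _ ≤ ξ * (C * S) / C := by gcongr
      _ = ξ * S := by field_simp
      _ ≤ _ := hk
  have hsq := pow_le_pow_left₀ (by positivity) habs 2
  rwa [sq_abs, mul_pow, ← Real.rpow_natCast ((‖v‖ ^ 2) ^ (1 - γ)), ← Real.rpow_mul (sq_nonneg _),
    Nat.cast_ofNat, mul_comm (1 - γ)] at hsq

theorem weakGreedy_norm_sq_le (hx : ∀ j, ‖x j‖ = 1) (hG : (gram ℝ x).IsHermitian) {l : ℝ}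
    (hl : 0 < l) (hle : ∀ i, l ≤ hG.eigenvalues i) {C γ : ℝ} (hC : 0 < C) (hγ0 : 0 ≤ γ)
    (hγ : γ < 1 / 2) (hβ : ∀ J : Finset ι, ∑ j ∈ J, |β j| ≤ C * (∑ j ∈ J, β j ^ 2) ^ γ)
    (hd : d = ∑ j, β j • x j) {ξ : ℝ} (hξ : 0 < ξ) {Js : ℕ → Finset ι} {k : ℕ → ι}
    {vs : ℕ → E} (hJs : ∀ m, Js (m + 1) = insert (k m) (Js m))
    (hres : ∀ m, IsResidual x d (Js m) (vs m))
    (hk : ∀ m, ξ * ⨆ i, |⟪vs m, x i⟫_ℝ| ≤ |⟪vs m, x (k m)⟫_ℝ|) {m : ℕ} (hm : 0 < m) :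
    ‖vs m‖ ^ 2 ≤ ((ξ * l ^ γ / C) ^ 2 * (1 - 2 * γ) * m) ^ (-(1 - 2 * γ)⁻¹) := by
  refine le_rpow_neg_of_le_sub_mul_rpow (a := fun n => ‖vs n‖ ^ 2) (by positivity)
    (by linarith) (fun n => sq_nonneg _) (fun n => ?_) hm
  have hstep := (hres n).norm_sq_le_of_insert (hJs n ▸ hres (n + 1)) (hx (k n))
  have hgain := (hres n).mul_rpow_le_sq_inner hd hG hl hle hC hγ0 (by linarith) hβ hξ.le (hk n)
  rw [show 1 + (1 - 2 * γ) = 2 * (1 - γ) by ring]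
  linarith

end Residual

section L2

variable {Ω ι : Type*} [MeasurableSpace Ω] {μ : Measure Ω}

theorem inner_toLp_toLp {f g : Ω → ℝ} (hf : MemLp f 2 μ) (hg : MemLp g 2 μ) :
    ⟪hf.toLp f, hg.toLp g⟫_ℝ = ∫ ω, f ω * g ω ∂μ := by
  rw [L2.inner_def]
  refine integral_congr_ae ?_
  filter_upwards [hf.coeFn_toLp, hg.coeFn_toLp] with ω hfω hgω
  rw [hfω, hgω, Real.inner_apply]

theorem norm_toLp_sq {f : Ω → ℝ} (hf : MemLp f 2 μ) :
    ‖hf.toLp f‖ ^ 2 = ∫ ω, f ω ^ 2 ∂μ := by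
  rw [← real_inner_self_eq_norm_sq, inner_toLp_toLp]
  simp only [sq]

theorem toLp_eq_sum_smul {p : ENNReal} {X : ι → Ω → ℝ} (hX : ∀ j, MemLp (X j) p μ)
    (s : Finset ι) (c : ι → ℝ) {f : Ω → ℝ} (hf : MemLp f p μ)
    (hfeq : ∀ ω, f ω = ∑ j ∈ s, c j * X j ω) :
    hf.toLp f = ∑ j ∈ s, c j • (hX j).toLp (X j) := by
  classical
  induction s using Finset.induction_on generalizing f with
  | empty =>
    obtain rfl : f = 0 := funext fun ω => by simpa using hfeq ω
    exact MemLp.toLp_zero hf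
  | insert a s ha ih =>
    have hg : MemLp (fun ω => ∑ j ∈ s, c j * X j ω) p μ :=
      memLp_finsetSum s fun j _ => (hX j).const_mul (c j)
    obtain rfl : f = c a • X a + fun ω => ∑ j ∈ s, c j * X j ω :=
      funext fun ω => by simp [hfeq, Finset.sum_insert ha]
    rw [Finset.sum_insert ha, ← ih hg fun _ => rfl]
    exact MemLp.toLp_add ((hX a).const_smul (c a)) hg

theorem exists_isResidual_toLp {X : ι → Ω → ℝ} (hX : ∀ j, MemLp (X j) 2 μ) {D V : Ω → ℝ}
    (hD : MemLp D 2 μ) {J : Finset ι} (hrep : ∃ c : ι → ℝ, ∀ ω, V ω = D ω - ∑ j ∈ J, c j * X j ω)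
    (horth : ∀ j ∈ J, ∫ ω, V ω * X j ω ∂μ = 0) :
    ∃ hV : MemLp V 2 μ, IsResidual (fun j => (hX j).toLp (X j)) (hD.toLp D) J (hV.toLp V) := by
  obtain ⟨c, hc⟩ := hrep
  have hS : MemLp (fun ω => ∑ j ∈ J, c j * X j ω) 2 μ :=
    memLp_finsetSum J fun j _ => (hX j).const_mul (c j)
  obtain rfl : V = D - fun ω => ∑ j ∈ J, c j * X j ω := funext hc
  refine ⟨hD.sub hS, ⟨c, ?_⟩, fun j hj => by rw [inner_toLp_toLp]; exact horth j hj⟩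
  rw [MemLp.toLp_sub hD hS, toLp_eq_sum_smul hX J c hS fun _ => rfl]

end L2

theorem stmt_15_general (ξ lam₁ α Cα ED2 : ℝ)
    (hξ0 : 0 < ξ) (hlam₁ : 0 < lam₁) (hα : 1 < α) (hCα : 0 < Cα) :
    ∃ G₁ : ℝ, 0 < G₁ ∧
      ∀ (p : ℕ), 0 < p →
      ∀ (Ω : Type) (_inst : MeasurableSpace Ω) (μ : Measure Ω),
        IsProbabilityMeasure μ →
        ∀ X : Fin p → Ω → ℝ,
          (∀ j, MemLp (X j) 2 μ) →
          (∀ j, ∫ ω, (X j ω) ^ 2 ∂μ = 1) →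
          ∀ (Γ : Matrix (Fin p) (Fin p) ℝ),
            (∀ j k, Γ j k = ∫ ω, X j ω * X k ω ∂μ) →
            ∀ (hΓ : Γ.IsHermitian), lam₁ ≤ ⨅ i, hΓ.eigenvalues i →
          ∀ β : Fin p → ℝ,
            (∀ J : Finset (Fin p),
              ∑ j ∈ J, |β j| ≤ Cα * (∑ j ∈ J, (β j) ^ 2) ^ ((α - 1) / (2 * α - 1))) →
          ∀ D : Ω → ℝ, (∀ ω, D ω = ∑ j : Fin p, β j * X j ω) →
            (∫ ω, (D ω) ^ 2 ∂μ = ED2) →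
          ∀ (Jseq : ℕ → Finset (Fin p)) (jsel : ℕ → Fin p) (V : ℕ → Ω → ℝ),
            Jseq 0 = ∅ →
            (∀ ω, V 0 ω = D ω) →
            (∀ m : ℕ, Jseq (m + 1) = insert (jsel m) (Jseq m)) →
            (∀ m : ℕ, ξ * ⨆ l : Fin p, |∫ ω, V m ω * X l ω ∂μ|
                ≤ |∫ ω, V m ω * X (jsel m) ω ∂μ|) →
            (∀ m : ℕ, ∃ c : Fin p → ℝ,
              ∀ ω, V m ω = D ω - ∑ j ∈ Jseq m, c j * X j ω) →
            (∀ m : ℕ, ∀ j ∈ Jseq m, ∫ ω, V m ω * X j ω ∂μ = 0) →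
            ∀ m : ℕ, 1 ≤ m →
              ∫ ω, (V m ω) ^ 2 ∂μ ≤ G₁ * (m : ℝ) ^ (-(2 * α - 1)) := by
  set γ := (α - 1) / (2 * α - 1) with hγ
  have hr : 0 < 2 * α - 1 := by linarith
  have hγ0 : 0 ≤ γ := div_nonneg (by linarith) hr.le
  have hθ : 1 - 2 * γ = (2 * α - 1)⁻¹ := by rw [hγ]; field_simp; ring
  have hθ0 : 0 < 1 - 2 * γ := by rw [hθ]; exact inv_pos.mpr hr
  refine ⟨((ξ * lam₁ ^ γ / Cα) ^ 2 * (1 - 2 * γ)) ^ (-(2 * α - 1)),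
    Real.rpow_pos_of_pos (by positivity) _, ?_⟩
  intro p _ Ω _ μ _ X hX hXnorm Γ hΓdef hΓ hlam β hβ D hD _ Jseq jsel V _ _ hJseq hgreedy hVrep
    hVorth m hm
  have hDm : MemLp D 2 μ := by
    rw [funext hD]
    exact memLp_finsetSum _ fun j _ => (hX j).const_mul (β j)
  choose hV hres using fun m => exists_isResidual_toLp hX hDm (hVrep m) (hVorth m)
  obtain rfl : Γ = gram ℝ fun j => (hX j).toLp (X j) :=
    Matrix.ext fun j k => by rw [hΓdef, gram_apply, inner_toLp_toLp]
  have hnorm : ∀ j, ‖(hX j).toLp (X j)‖ = 1 := fun j =>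
    (pow_eq_one_iff_of_nonneg (norm_nonneg _) two_ne_zero).mp (by rw [norm_toLp_sq, hXnorm])
  have hrate := weakGreedy_norm_sq_le hnorm hΓ hlam₁
    (fun i => hlam.trans (ciInf_le (Set.finite_range _).bddBelow i)) hCα hγ0 (by linarith) hβ
    (toLp_eq_sum_smul hX Finset.univ β hDm hD) hξ0 hJseq hres
    (fun m => by simpa only [inner_toLp_toLp] using hgreedy m) hm
  rwa [norm_toLp_sq, show -(1 - 2 * γ)⁻¹ = -(2 * α - 1) by rw [hθ, inv_inv],
    Real.mul_rpow (mul_pos (by positivity) hθ0).le (Nat.cast_nonneg m)] at hrate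

/-- Population weak-OGA approximation rate (display (A.1) / Step 2 of the proof of
Theorem 2): under `E[Xⱼ²] = 1`, `λ_min(E[XX']) ≥ λ₁ > 0`, and the polynomial-decay
class condition on `β`, the residuals `V_m = D − P_{J_m} D` of the population weak
orthogonal greedy algorithm with weakness parameter `ξ` satisfy
`E[V_m²] ≤ G₁ m^{−(2α−1)}` for all `m ≥ 1`, where `G₁ > 0` depends only on
`ξ, λ₁, α, C_α` and `E[D²]`. -/
theorem stmt_15 (ξ lam₁ α Cα ED2 : ℝ)
    (hξ0 : 0 < ξ) (hξ1 : ξ ≤ 1) (hlam₁ : 0 < lam₁) (hα : 1 < α) (hCα : 0 < Cα) :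
    ∃ G₁ : ℝ, 0 < G₁ ∧
      ∀ (p : ℕ), 0 < p →
      ∀ (Ω : Type) (_inst : MeasurableSpace Ω) (μ : Measure Ω),
        IsProbabilityMeasure μ →
        ∀ X : Fin p → Ω → ℝ,
          (∀ j, MemLp (X j) 2 μ) →
          (∀ j, ∫ ω, (X j ω) ^ 2 ∂μ = 1) →
          ∀ (Γ : Matrix (Fin p) (Fin p) ℝ),
            (∀ j k, Γ j k = ∫ ω, X j ω * X k ω ∂μ) →
            ∀ (hΓ : Γ.IsHermitian), lam₁ ≤ ⨅ i, hΓ.eigenvalues i →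
          ∀ β : Fin p → ℝ,
            (∀ J : Finset (Fin p),
              ∑ j ∈ J, |β j| ≤ Cα * (∑ j ∈ J, (β j) ^ 2) ^ ((α - 1) / (2 * α - 1))) →
          ∀ D : Ω → ℝ, (∀ ω, D ω = ∑ j : Fin p, β j * X j ω) →
            (∫ ω, (D ω) ^ 2 ∂μ = ED2) →
          ∀ (Jseq : ℕ → Finset (Fin p)) (jsel : ℕ → Fin p) (V : ℕ → Ω → ℝ),
            Jseq 0 = ∅ →
            (∀ ω, V 0 ω = D ω) →
            (∀ m : ℕ, Jseq (m + 1) = insert (jsel m) (Jseq m)) →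
            (∀ m : ℕ, ξ * ⨆ l : Fin p, |∫ ω, V m ω * X l ω ∂μ|
                ≤ |∫ ω, V m ω * X (jsel m) ω ∂μ|) →
            (∀ m : ℕ, ∃ c : Fin p → ℝ,
              ∀ ω, V m ω = D ω - ∑ j ∈ Jseq m, c j * X j ω) →
            (∀ m : ℕ, ∀ j ∈ Jseq m, ∫ ω, V m ω * X j ω ∂μ = 0) →
            ∀ m : ℕ, 1 ≤ m →
              ∫ ω, (V m ω) ^ 2 ∂μ ≤ G₁ * (m : ℝ) ^ (-(2 * α - 1)) :=
  stmt_15_general ξ lam₁ α Cα ED2 hξ0 hlam₁ hα hCα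
end

section
/- Let X = (X_1, …, X_p) be a square-integrable random vector in R^p with E[X_j²] = 1 for all j and λ_min(E[X X']) ≥ λ₁ > 0. Let α > 1 and C_α > 0, and let β ∈ R^p satisfy the polynomial-decay class condition: ‖β(J)‖₁ ≤ C_α (‖β(J)‖₂²)^{(α−1)/(2α−1)} for every J ⊆ {1, …, p}. Let D = Σ_{j=1}^p β_j X_j, fix ξ ∈ (0,1], and let (J_m, V_m)_{m ≥ 0} be the population weak orthogonal greedy sequence: V_0 = D, J_0 = ∅, and for m ≥ 1, J_m = J_{m−1} ∪ {j_m} with |E[V_{m−1} X_{j_m}]| ≥ ξ max_{1≤ℓ≤p} |E[V_{m−1} X_ℓ]|, and V_m = D − P_{J_m} D, where P_{J_m} is the orthogonal projection in L² onto span{X_j : j ∈ J_m}. Then for every m ≥ 0, E[V_{m+1}²] ≤ E[V_m²] · ( 1 − ξ² λ₁^{2(α−1)/(2α−1)} C_α^{−2} ( E[V_m²] )^{1/(2α−1)} ). -/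
/-!
Work in `L²(μ)`. The new residual `v (m+1)` is orthogonal to `span {x j | j ∈ J (m+1)}`, which
contains `v m - ⟪v m, x j₀⟫ x j₀ - v (m+1)`; by Pythagoras
`‖v (m+1)‖² ≤ ‖v m‖² - ⟪v m, x j₀⟫² ≤ ‖v m‖² - ξ² S²`, where `S` is the largest cross moment
`|⟪v m, x l⟫|`. Since `v m` is orthogonal to the selected `x j`, `‖v m‖² = ⟪v m, D⟫` is bounded
by `‖β(Jᶜ)‖₁ S`, while the eigenvalue bound on the Gram matrix gives
`λ₁ ‖β(Jᶜ)‖₂² ≤ ‖v m‖²`. The class condition links the two norms of `β(Jᶜ)` and so yields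
`S ≥ λ₁^κ Cα⁻¹ ‖v m‖^(2(1-κ))` with `κ = (α-1)/(2α-1)`, which is the claimed contraction.
-/

open MeasureTheory Finset Matrix
open scoped RealInnerProductSpace

theorem Matrix.IsHermitian.mul_dotProduct_self_le {n : Type*} [Fintype n] [DecidableEq n]
    {A : Matrix n n ℝ} (hA : A.IsHermitian) {c : ℝ} (hc : ∀ i, c ≤ hA.eigenvalues i)
    (x : n → ℝ) : c * (x ⬝ᵥ x) ≤ x ⬝ᵥ A *ᵥ x := by
  open MatrixOrder in
  have hle : algebraMap ℝ _ c ≤ A := by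
    rw [algebraMap_le_iff_le_spectrum (a := A) hA.isSelfAdjoint,
      hA.spectrum_real_eq_range_eigenvalues]
    rintro _ ⟨i, rfl⟩
    exact hc i
  have := (Matrix.le_iff.1 hle).dotProduct_mulVec_nonneg x
  rw [sub_mulVec, dotProduct_sub, Algebra.algebraMap_eq_smul_one, smul_mulVec, one_mulVec,
    dotProduct_smul, star_trivial, smul_eq_mul] at this
  linarith

open Real in
theorem le_mul_one_sub_of_le_rpow_mul {E E' S a ξ lam C α : ℝ} (hα : 1 < α) (hlam : 0 < lam)
    (hC : 0 < C) (hξ : 0 ≤ ξ) (hE : 0 ≤ E) (hS : 0 ≤ S)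
    (hES : E ≤ C * (E / lam) ^ ((α - 1) / (2 * α - 1)) * S) (ha : ξ * S ≤ |a|)
    (hE' : E' ≤ E - a ^ 2) :
    E' ≤ E * (1 - ξ ^ 2 * lam ^ (2 * (α - 1) / (2 * α - 1)) * C⁻¹ ^ 2 * E ^ (1 / (2 * α - 1))) := by
  rcases hE.eq_or_lt with rfl | hEpos
  · nlinarith [sq_nonneg a]
  set κ := (α - 1) / (2 * α - 1) with hκ
  have h2α : 2 * α - 1 ≠ 0 := by linarith
  have hlow : lam ^ κ * E ^ (1 - κ) ≤ C * S := by
    have hsplit : E = E ^ κ * E ^ (1 - κ) := by rw [← rpow_add hEpos, add_sub_cancel, rpow_one]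
    refine le_of_mul_le_mul_left ?_ (rpow_pos_of_pos hEpos κ)
    calc E ^ κ * (lam ^ κ * E ^ (1 - κ)) = lam ^ κ * (E ^ κ * E ^ (1 - κ)) := by ring
      _ = lam ^ κ * E := by rw [← hsplit]
      _ ≤ lam ^ κ * (C * (E / lam) ^ κ * S) := by gcongr
      _ = E ^ κ * (C * S) := by
        rw [div_rpow hE hlam.le]; field_simp
  have hsq : E * (lam ^ (2 * (α - 1) / (2 * α - 1)) * E ^ (1 / (2 * α - 1)))
      = (lam ^ κ * E ^ (1 - κ)) ^ 2 := by
    rw [mul_pow, ← rpow_mul_natCast hlam.le, ← rpow_mul_natCast hE,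
      show (1 - κ) * ((2 : ℕ) : ℝ) = 1 + 1 / (2 * α - 1) by
        rw [hκ, one_sub_div h2α, one_add_div h2α, div_mul_eq_mul_div]; push_cast; ring,
      rpow_add hEpos, rpow_one, show κ * ((2 : ℕ) : ℝ) = 2 * (α - 1) / (2 * α - 1) by
        rw [hκ]; push_cast; ring]
    ring
  have hξS : (ξ * S) ^ 2 ≤ a ^ 2 := by
    rw [← sq_abs a]; exact pow_le_pow_left₀ (mul_nonneg hξ hS) ha 2
  calc E' ≤ E - a ^ 2 := hE'
    _ ≤ E - (ξ * S) ^ 2 := by linarith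
    _ ≤ E - (ξ * (C⁻¹ * (lam ^ κ * E ^ (1 - κ)))) ^ 2 := by
      have : C⁻¹ * (lam ^ κ * E ^ (1 - κ)) ≤ S := by
        rw [inv_mul_le_iff₀ hC]; exact hlow
      gcongr
    _ = _ := by rw [mul_one_sub, mul_pow, mul_pow, ← hsq]; ring

section InnerProductSpace

variable {F : Type*} [NormedAddCommGroup F] [InnerProductSpace ℝ F] {ι : Type*}

theorem min_eigenvalue_mul_sum_sq_le_norm_sq [Fintype ι] [DecidableEq ι] (x : ι → F) {c : ℝ}
    (hc : ∀ i, c ≤ (isHermitian_gram ℝ x).eigenvalues i) (γ : ι → ℝ) :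
    c * ∑ i, γ i ^ 2 ≤ ‖∑ i, γ i • x i‖ ^ 2 := by
  have h := (isHermitian_gram ℝ x).mul_dotProduct_self_le hc γ
  have hnorm := star_dotProduct_gram_mulVec (𝕜 := ℝ) x γ γ
  rw [star_trivial, real_inner_self_eq_norm_sq] at hnorm
  simpa only [← hnorm, dotProduct, sq] using h

theorem norm_sq_le_of_mem_orthogonal {K : Submodule ℝ F} {v w : F} (hv : v ∈ Kᗮ)
    (hw : w - v ∈ K) : ‖v‖ ^ 2 ≤ ‖w‖ ^ 2 := by
  have h := norm_add_sq_eq_norm_sq_add_norm_sq_real (K.inner_left_of_mem_orthogonal hw hv)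
  rw [add_sub_cancel] at h
  rw [sq, sq, h]
  exact le_add_of_nonneg_right (mul_self_nonneg _)

theorem norm_sub_inner_smul_sq (v : F) {e : F} (he : ‖e‖ = 1) :
    ‖v - ⟪v, e⟫ • e‖ ^ 2 = ‖v‖ ^ 2 - ⟪v, e⟫ ^ 2 := by
  rw [norm_sub_sq_real, real_inner_smul_right, norm_smul, he, mul_one, Real.norm_eq_abs, sq_abs]
  ring

theorem sum_smul_mem_span_image (x : ι → F) (s : Finset ι) (c : ι → ℝ) :
    ∑ j ∈ s, c j • x j ∈ Submodule.span ℝ (x '' s) :=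
  Submodule.sum_mem _ fun j hj => Submodule.smul_mem _ _ (Submodule.subset_span ⟨j, hj, rfl⟩)

theorem mem_orthogonal_span_image {x : ι → F} {s : Set ι} {v : F}
    (hv : ∀ j ∈ s, ⟪v, x j⟫ = 0) : v ∈ (Submodule.span ℝ (x '' s))ᗮ := by
  rw [Submodule.mem_orthogonal']
  intro u hu
  induction hu using Submodule.span_induction with
  | mem _ h => obtain ⟨j, hj, rfl⟩ := h; exact hv j hj
  | zero => exact inner_zero_right _
  | add _ _ _ _ h₁ h₂ => rw [inner_add_right, h₁, h₂, add_zero]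
  | smul a _ _ h => rw [real_inner_smul_right, h, mul_zero]

theorem norm_sq_le_norm_sq_sub_inner_sq [DecidableEq ι] {x : ι → F} {J : Finset ι} {j₀ : ι}
    {d v v' : F} (hx : ‖x j₀‖ = 1) (hv : ∃ c : ι → ℝ, v = d - ∑ j ∈ J, c j • x j)
    (hv' : ∃ c : ι → ℝ, v' = d - ∑ j ∈ insert j₀ J, c j • x j)
    (horth' : ∀ j ∈ insert j₀ J, ⟪v', x j⟫ = 0) :
    ‖v'‖ ^ 2 ≤ ‖v‖ ^ 2 - ⟪v, x j₀⟫ ^ 2 := by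
  obtain ⟨c, hc⟩ := hv
  obtain ⟨c', hc'⟩ := hv'
  set a := ⟪v, x j₀⟫
  rw [← norm_sub_inner_smul_sq v hx]
  refine norm_sq_le_of_mem_orthogonal (mem_orthogonal_span_image horth') ?_
  have hw : v - a • x j₀ - v' =
      ∑ j ∈ insert j₀ J, c' j • x j - ∑ j ∈ J, c j • x j - a • x j₀ := by
    rw [hc, hc']; abel
  have hJ : Submodule.span ℝ (x '' J) ≤ Submodule.span ℝ (x '' ↑(insert j₀ J)) :=
    Submodule.span_mono (Set.image_mono (coe_subset.2 (subset_insert _ _)))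
  have hj₀ : x j₀ ∈ Submodule.span ℝ (x '' ↑(insert j₀ J)) :=
    Submodule.subset_span ⟨j₀, mem_insert_self _ _, rfl⟩
  rw [hw]
  exact Submodule.sub_mem _ (Submodule.sub_mem _ (sum_smul_mem_span_image x _ c')
    (hJ (sum_smul_mem_span_image x J c))) (Submodule.smul_mem _ _ hj₀)

end InnerProductSpace

section WeakGreedy

variable {F : Type*} [NormedAddCommGroup F] [InnerProductSpace ℝ F]
  {ι : Type*} [Fintype ι] [DecidableEq ι] {x : ι → F} {β : ι → ℝ} {J : Finset ι} {v : F}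

theorem norm_sq_eq_sum_compl_mul_inner
    (hv : ∃ c : ι → ℝ, v = ∑ j, β j • x j - ∑ j ∈ J, c j • x j)
    (horth : ∀ j ∈ J, ⟪v, x j⟫ = 0) : ‖v‖ ^ 2 = ∑ j ∈ Jᶜ, β j * ⟪v, x j⟫ := by
  obtain ⟨c, hc⟩ := hv
  have hJ : ∀ b : ι → ℝ, ∑ j ∈ J, b j * ⟪v, x j⟫ = 0 := fun b =>
    sum_eq_zero fun j hj => by rw [horth j hj, mul_zero]
  calc ‖v‖ ^ 2 = ⟪v, v⟫ := (real_inner_self_eq_norm_sq v).symm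
    _ = ∑ j, β j * ⟪v, x j⟫ - ∑ j ∈ J, c j * ⟪v, x j⟫ := by
      nth_rw 2 [hc]
      simp only [inner_sub_right, inner_sum, real_inner_smul_right]
    _ = ∑ j ∈ Jᶜ, β j * ⟪v, x j⟫ := by
      rw [← sum_compl_add_sum J, hJ, hJ, add_zero, sub_zero]

theorem norm_sq_le_sum_compl_abs_mul
    (hv : ∃ c : ι → ℝ, v = ∑ j, β j • x j - ∑ j ∈ J, c j • x j)
    (horth : ∀ j ∈ J, ⟪v, x j⟫ = 0) {S : ℝ} (hS : ∀ l, |⟪v, x l⟫| ≤ S) :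
    ‖v‖ ^ 2 ≤ (∑ j ∈ Jᶜ, |β j|) * S := by
  rw [norm_sq_eq_sum_compl_mul_inner hv horth, sum_mul]
  refine sum_le_sum fun j _ => ?_
  calc β j * ⟪v, x j⟫ ≤ |β j| * |⟪v, x j⟫| := by rw [← abs_mul]; exact le_abs_self _
    _ ≤ |β j| * S := by gcongr; exact hS j

theorem mul_sum_compl_sq_le_norm_sq {lam : ℝ} (hlam : 0 ≤ lam)
    (hmin : ∀ i, lam ≤ (isHermitian_gram ℝ x).eigenvalues i)
    (hv : ∃ c : ι → ℝ, v = ∑ j, β j • x j - ∑ j ∈ J, c j • x j) :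
    lam * ∑ j ∈ Jᶜ, β j ^ 2 ≤ ‖v‖ ^ 2 := by
  obtain ⟨c, hc⟩ := hv
  set γ : ι → ℝ := fun j => β j - if j ∈ J then c j else 0
  have hγ : v = ∑ j, γ j • x j := by
    simp only [hc, γ, sub_smul, sum_sub_distrib, ite_smul, zero_smul, sum_ite_mem, univ_inter]
  calc lam * ∑ j ∈ Jᶜ, β j ^ 2 = lam * ∑ j ∈ Jᶜ, γ j ^ 2 := by
        congr 1; refine sum_congr rfl fun j hj => ?_
        rw [mem_compl] at hj; simp [γ, hj]
    _ ≤ lam * ∑ j, γ j ^ 2 := by gcongr; exact subset_univ _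
    _ ≤ ‖v‖ ^ 2 := hγ ▸ min_eigenvalue_mul_sum_sq_le_norm_sq x hmin γ

def IsPolyDecayClass (α C : ℝ) (β : ι → ℝ) : Prop :=
  ∀ J : Finset ι, ∑ j ∈ J, |β j| ≤ C * (∑ j ∈ J, β j ^ 2) ^ ((α - 1) / (2 * α - 1))

theorem norm_sq_weakGreedy_step_le (hx : ∀ j, ‖x j‖ = 1) {lam₁ : ℝ} (hlam₁ : 0 < lam₁)
    (hmin : ∀ i, lam₁ ≤ (isHermitian_gram ℝ x).eigenvalues i) {α Cα : ℝ} (hα : 1 < α)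
    (hCα : 0 < Cα) (hβ : IsPolyDecayClass α Cα β) {ξ : ℝ} (hξ : 0 ≤ ξ) {j₀ : ι} {v' : F}
    (hsel : ξ * ⨆ l, |⟪v, x l⟫| ≤ |⟪v, x j₀⟫|)
    (hv : ∃ c : ι → ℝ, v = ∑ j, β j • x j - ∑ j ∈ J, c j • x j)
    (horth : ∀ j ∈ J, ⟪v, x j⟫ = 0)
    (hv' : ∃ c : ι → ℝ, v' = ∑ j, β j • x j - ∑ j ∈ insert j₀ J, c j • x j)
    (horth' : ∀ j ∈ insert j₀ J, ⟪v', x j⟫ = 0) :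
    ‖v'‖ ^ 2 ≤ ‖v‖ ^ 2 * (1 - ξ ^ 2 * lam₁ ^ (2 * (α - 1) / (2 * α - 1)) * Cα⁻¹ ^ 2 *
      (‖v‖ ^ 2) ^ (1 / (2 * α - 1))) := by
  set S := ⨆ l, |⟪v, x l⟫|
  have hS : ∀ l, |⟪v, x l⟫| ≤ S := fun l =>
    le_ciSup (f := fun l => |⟪v, x l⟫|) (Set.finite_range _).bddAbove l
  have hS0 : 0 ≤ S := (abs_nonneg _).trans (hS j₀)
  have hβ₂ : ∑ j ∈ Jᶜ, β j ^ 2 ≤ ‖v‖ ^ 2 / lam₁ := by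
    rw [le_div_iff₀ hlam₁, mul_comm]
    exact mul_sum_compl_sq_le_norm_sq hlam₁.le hmin hv
  have hE : ‖v‖ ^ 2 ≤ Cα * (‖v‖ ^ 2 / lam₁) ^ ((α - 1) / (2 * α - 1)) * S :=
    calc ‖v‖ ^ 2 ≤ (∑ j ∈ Jᶜ, |β j|) * S := norm_sq_le_sum_compl_abs_mul hv horth hS
      _ ≤ Cα * (∑ j ∈ Jᶜ, β j ^ 2) ^ ((α - 1) / (2 * α - 1)) * S := by gcongr; exact hβ Jᶜ
      _ ≤ Cα * (‖v‖ ^ 2 / lam₁) ^ ((α - 1) / (2 * α - 1)) * S := by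
        gcongr
        exact div_nonneg (sub_nonneg.2 hα.le) (by linarith)
  exact le_mul_one_sub_of_le_rpow_mul hα hlam₁ hCα hξ (sq_nonneg _) hS0 hE hsel
    (norm_sq_le_norm_sq_sub_inner_sq (hx j₀) hv hv' horth')

end WeakGreedy

namespace MeasureTheory.MemLp

variable {Ω : Type*} [MeasurableSpace Ω] {μ : Measure Ω}

theorem integral_mul_eq_inner_toLp {f g : Ω → ℝ} (hf : MemLp f 2 μ) (hg : MemLp g 2 μ) :
    ∫ ω, f ω * g ω ∂μ = ⟪hf.toLp f, hg.toLp g⟫ := by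
  rw [L2.inner_def]
  refine integral_congr_ae ?_
  filter_upwards [hf.coeFn_toLp, hg.coeFn_toLp] with ω hfω hgω
  rw [hfω, hgω, real_inner_eq_re_inner, RCLike.inner_apply, conj_trivial, mul_comm]
  rfl

theorem integral_sq_eq_norm_toLp_sq {f : Ω → ℝ} (hf : MemLp f 2 μ) :
    ∫ ω, f ω ^ 2 ∂μ = ‖hf.toLp f‖ ^ 2 := by
  simp_rw [sq, hf.integral_mul_eq_inner_toLp hf, real_inner_self_eq_norm_mul_norm]

theorem toLp_sum_mul {ι : Type*} {p : ENNReal} {X : ι → Ω → ℝ} (hX : ∀ j, MemLp (X j) p μ)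
    (s : Finset ι) (c : ι → ℝ) (h : MemLp (fun ω => ∑ j ∈ s, c j * X j ω) p μ) :
    h.toLp _ = ∑ j ∈ s, c j • (hX j).toLp (X j) := by
  classical
  induction s using Finset.induction_on with
  | empty => exact toLp_zero _
  | insert a s ha ih =>
    have hs : MemLp (fun ω => ∑ j ∈ s, c j * X j ω) p μ :=
      memLp_finsetSum s fun j _ => (hX j).const_mul (c j)
    rw [sum_insert ha, ← ih hs, ← toLp_const_smul, ← toLp_add]
    exact toLp_congr _ _ (.of_forall fun ω => by simp [sum_insert ha])

theorem exists_toLp_eq_sum_smul_sub_sum_smul {ι : Type*} [Fintype ι] {p : ENNReal}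
    {X : ι → Ω → ℝ} (hX : ∀ j, MemLp (X j) p μ) {V : Ω → ℝ} {β c : ι → ℝ} {s : Finset ι}
    (hV : ∀ ω, V ω = ∑ j, β j * X j ω - ∑ j ∈ s, c j * X j ω) :
    ∃ hVp : MemLp V p μ,
      hVp.toLp V = ∑ j, β j • (hX j).toLp (X j) - ∑ j ∈ s, c j • (hX j).toLp (X j) := by
  have hcomb : ∀ (s : Finset ι) (c : ι → ℝ), MemLp (fun ω => ∑ j ∈ s, c j * X j ω) p μ :=
    fun s c => memLp_finsetSum s fun j _ => (hX j).const_mul (c j)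
  obtain rfl : V = (fun ω => ∑ j, β j * X j ω) - fun ω => ∑ j ∈ s, c j * X j ω := funext hV
  refine ⟨(hcomb _ β).sub (hcomb s c), ?_⟩
  rw [toLp_sub (hcomb _ β) (hcomb s c), toLp_sum_mul hX, toLp_sum_mul hX]

end MeasureTheory.MemLp

theorem stmt_16_general (p : ℕ)
    (Ω : Type*) [MeasurableSpace Ω] (μ : Measure Ω)
    (X : Fin p → Ω → ℝ) (hX : ∀ j, MemLp (X j) 2 μ)
    (hXnorm : ∀ j, ∫ ω, (X j ω) ^ 2 ∂μ = 1)
    (Γ : Matrix (Fin p) (Fin p) ℝ)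
    (hΓdef : ∀ j k, Γ j k = ∫ ω, X j ω * X k ω ∂μ)
    (hΓ : Γ.IsHermitian)
    (lam₁ : ℝ) (hlam₁ : 0 < lam₁) (hmin : lam₁ ≤ ⨅ i, hΓ.eigenvalues i)
    (α Cα : ℝ) (hα : 1 < α) (hCα : 0 < Cα)
    (β : Fin p → ℝ)
    (hclass : ∀ J : Finset (Fin p),
      ∑ j ∈ J, |β j| ≤ Cα * (∑ j ∈ J, (β j) ^ 2) ^ ((α - 1) / (2 * α - 1)))
    (D : Ω → ℝ) (hD : ∀ ω, D ω = ∑ j : Fin p, β j * X j ω)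
    (ξ : ℝ) (hξ0 : 0 < ξ)
    (Jseq : ℕ → Finset (Fin p)) (jsel : ℕ → Fin p) (V : ℕ → Ω → ℝ)
    (hJrec : ∀ m : ℕ, Jseq (m + 1) = insert (jsel m) (Jseq m))
    (hsel : ∀ m : ℕ, ξ * ⨆ l : Fin p, |∫ ω, V m ω * X l ω ∂μ|
        ≤ |∫ ω, V m ω * X (jsel m) ω ∂μ|)
    (hVspan : ∀ m : ℕ, ∃ c : Fin p → ℝ,
      ∀ ω, V m ω = D ω - ∑ j ∈ Jseq m, c j * X j ω)
    (hVorth : ∀ m : ℕ, ∀ j ∈ Jseq m, ∫ ω, V m ω * X j ω ∂μ = 0) :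
    ∀ m : ℕ,
      ∫ ω, (V (m + 1) ω) ^ 2 ∂μ
        ≤ (∫ ω, (V m ω) ^ 2 ∂μ) *
            (1 - ξ ^ 2 * lam₁ ^ (2 * (α - 1) / (2 * α - 1)) * Cα⁻¹ ^ 2 *
              (∫ ω, (V m ω) ^ 2 ∂μ) ^ (1 / (2 * α - 1))) := by
  have hV : ∀ m, ∃ c : Fin p → ℝ, ∀ ω, V m ω = ∑ j, β j * X j ω - ∑ j ∈ Jseq m, c j * X j ω :=
    fun m => (hVspan m).imp fun c hc ω => by rw [hc, hD]
  choose c hc using hV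
  choose hVmem hVrep using fun m => MemLp.exists_toLp_eq_sum_smul_sub_sum_smul hX (hc m)
  set x : Fin p → Lp ℝ 2 μ := fun j => (hX j).toLp (X j)
  set v : ℕ → Lp ℝ 2 μ := fun m => (hVmem m).toLp (V m)
  have hinner : ∀ m l, ∫ ω, V m ω * X l ω ∂μ = ⟪v m, x l⟫ := fun m l =>
    (hVmem m).integral_mul_eq_inner_toLp (hX l)
  have hx : ∀ j, ‖x j‖ = 1 := fun j => (pow_eq_one_iff_of_nonneg (norm_nonneg _) two_ne_zero).1
    ((hX j).integral_sq_eq_norm_toLp_sq.symm.trans (hXnorm j))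
  obtain rfl : Γ = gram ℝ x :=
    Matrix.ext fun j k => (hΓdef j k).trans ((hX j).integral_mul_eq_inner_toLp (hX k))
  have hmin' : ∀ i, lam₁ ≤ (isHermitian_gram ℝ x).eigenvalues i := fun i =>
    hmin.trans (ciInf_le (Set.finite_range _).bddBelow i)
  intro m
  have hv' := hVrep (m + 1)
  have horth' := hVorth (m + 1)
  rw [hJrec m] at hv' horth'
  simp only [hinner] at hsel hVorth horth'
  rw [(hVmem _).integral_sq_eq_norm_toLp_sq, (hVmem _).integral_sq_eq_norm_toLp_sq]
  exact norm_sq_weakGreedy_step_le hx hlam₁ hmin' hα hCα hclass hξ0.le (hsel m) ⟨_, hVrep m⟩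
    (hVorth m) ⟨_, hv'⟩ horth'

/-- One-step contraction (display (A.7) in the proof of Theorem 2): under
`E[Xⱼ²] = 1`, `λ_min(E[XX']) ≥ λ₁ > 0`, and the polynomial-decay class condition on
`β`, the residuals of the population weak orthogonal greedy algorithm with weakness
parameter `ξ` satisfy, for every `m ≥ 0`,
`E[V_{m+1}²] ≤ E[V_m²] (1 − ξ² λ₁^{2(α−1)/(2α−1)} C_α^{−2} (E[V_m²])^{1/(2α−1)})`. -/
theorem stmt_16 (p : ℕ) (hp : 0 < p)
    (Ω : Type*) [MeasurableSpace Ω] (μ : Measure Ω) [IsProbabilityMeasure μ]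
    (X : Fin p → Ω → ℝ) (hX : ∀ j, MemLp (X j) 2 μ)
    (hXnorm : ∀ j, ∫ ω, (X j ω) ^ 2 ∂μ = 1)
    (Γ : Matrix (Fin p) (Fin p) ℝ)
    (hΓdef : ∀ j k, Γ j k = ∫ ω, X j ω * X k ω ∂μ)
    (hΓ : Γ.IsHermitian)
    (lam₁ : ℝ) (hlam₁ : 0 < lam₁) (hmin : lam₁ ≤ ⨅ i, hΓ.eigenvalues i)
    (α Cα : ℝ) (hα : 1 < α) (hCα : 0 < Cα)
    (β : Fin p → ℝ)
    (hclass : ∀ J : Finset (Fin p),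
      ∑ j ∈ J, |β j| ≤ Cα * (∑ j ∈ J, (β j) ^ 2) ^ ((α - 1) / (2 * α - 1)))
    (D : Ω → ℝ) (hD : ∀ ω, D ω = ∑ j : Fin p, β j * X j ω)
    (ξ : ℝ) (hξ0 : 0 < ξ) (hξ1 : ξ ≤ 1)
    (Jseq : ℕ → Finset (Fin p)) (jsel : ℕ → Fin p) (V : ℕ → Ω → ℝ)
    (hJ0 : Jseq 0 = ∅)
    (hV0 : ∀ ω, V 0 ω = D ω)
    (hJrec : ∀ m : ℕ, Jseq (m + 1) = insert (jsel m) (Jseq m))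
    (hsel : ∀ m : ℕ, ξ * ⨆ l : Fin p, |∫ ω, V m ω * X l ω ∂μ|
        ≤ |∫ ω, V m ω * X (jsel m) ω ∂μ|)
    (hVspan : ∀ m : ℕ, ∃ c : Fin p → ℝ,
      ∀ ω, V m ω = D ω - ∑ j ∈ Jseq m, c j * X j ω)
    (hVorth : ∀ m : ℕ, ∀ j ∈ Jseq m, ∫ ω, V m ω * X j ω ∂μ = 0) :
    ∀ m : ℕ,
      ∫ ω, (V (m + 1) ω) ^ 2 ∂μ
        ≤ (∫ ω, (V m ω) ^ 2 ∂μ) *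
            (1 - ξ ^ 2 * lam₁ ^ (2 * (α - 1) / (2 * α - 1)) * Cα⁻¹ ^ 2 *
              (∫ ω, (V m ω) ^ 2 ∂μ) ^ (1 / (2 * α - 1))) :=
  stmt_16_general p Ω μ X hX hXnorm Γ hΓdef hΓ lam₁ hlam₁ hmin α Cα hα hCα β hclass D hD ξ hξ0 Jseq
    jsel V hJrec hsel hVspan hVorth
end
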